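/- arXiv:2406.05283 — 2 statements merged into one kernel-verified Lean document; each statement's English description precedes it below -/
import Mathlib

section
/- Let n ≥ 2, M = (𝟏𝟏ᵀ − I)/(n−1), ρ, ρ₀ ∈ (−1, 1), 𝓜(ρ) = (I + ρM)⁻¹(I + ρ₀M), and let A be an n×n symmetric matrix with zero diagonal. Then tr(𝓜(ρ)·A·𝓜(ρ)) = (ρ₀ − ρ)·C(ρ, n)·tr(A·J*), where C(ρ, n) = [ (1+ρ₀)/(1+ρ) + (n−1−ρ₀)/(n−1−ρ) ] · [ 1/(1+ρ) + 1/(n−1−ρ) ] and J* = (1/n)𝟏𝟏ᵀ. -/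
open Matrix

theorem stmt_10 (n : ℕ) (hn : 2 ≤ n) (ρ ρ₀ : ℝ)
    (hρ : ρ ∈ Set.Ioo (-1 : ℝ) 1) (hρ₀ : ρ₀ ∈ Set.Ioo (-1 : ℝ) 1)
    (J M A 𝓜 : Matrix (Fin n) (Fin n) ℝ)
    (hJ : J = (n : ℝ)⁻¹ • Matrix.of (fun _ _ => (1 : ℝ)))
    (hM : M = ((n : ℝ) - 1)⁻¹ • (Matrix.of (fun _ _ => (1 : ℝ)) - 1))
    (h𝓜 : 𝓜 = (1 + ρ • M)⁻¹ * (1 + ρ₀ • M))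
    (hAsymm : A.IsSymm) (hAdiag : ∀ i, A i i = 0) :
    (𝓜 * A * 𝓜).trace
      = (ρ₀ - ρ) *
        (((1 + ρ₀) / (1 + ρ) + ((n : ℝ) - 1 - ρ₀) / ((n : ℝ) - 1 - ρ)) *
          (1 / (1 + ρ) + 1 / ((n : ℝ) - 1 - ρ))) *
        (A * J).trace := by
  obtain ⟨hρ1, hρ2⟩ := hρ
  obtain ⟨hρ₀1, hρ₀2⟩ := hρ₀
  have hd2 : (2:ℝ) ≤ (n:ℝ) := by exact_mod_cast hn
  have hdn : (n:ℝ) ≠ 0 := by linarith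
  have hd1 : (n:ℝ) - 1 ≠ 0 := by linarith
  have h1ρ : 1 + ρ ≠ 0 := by linarith
  have hdρ : (n:ℝ) - 1 - ρ ≠ 0 := by linarith
  have hEE : (Matrix.of (fun _ _ => (1:ℝ)) : Matrix (Fin n) (Fin n) ℝ) *
      Matrix.of (fun _ _ => (1:ℝ)) = (n:ℝ) • Matrix.of (fun _ _ => (1:ℝ)) := by
    ext i j; simp [Matrix.mul_apply]
  have hEJ : (Matrix.of (fun _ _ => (1:ℝ)) : Matrix (Fin n) (Fin n) ℝ) = (n:ℝ) • J := by
    rw [hJ, smul_smul, mul_inv_cancel₀ hdn, one_smul]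
  have hJJ : J * J = J := by
    rw [hJ, smul_mul_assoc, mul_smul_comm, hEE, smul_smul, smul_smul]
    congr 1
    field_simp
  have key : ∀ p q r s : ℝ, (p•(1:Matrix (Fin n) (Fin n) ℝ) + q•J) * (r•1 + s•J)
      = (p*r)•1 + (p*s+q*r+q*s)•J := by
    intro p q r s
    simp only [add_mul, mul_add, smul_mul_assoc, mul_smul_comm, hJJ, one_mul, mul_one,
      smul_smul]
    module
  have hMform : (1:Matrix (Fin n) (Fin n) ℝ) + ρ • M
      = (((n:ℝ)-1-ρ)/((n:ℝ)-1))•1 + (ρ*(n:ℝ)/((n:ℝ)-1))•J := by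
    rw [hM, hEJ]
    match_scalars <;> field_simp <;> ring
  have hM0form : (1:Matrix (Fin n) (Fin n) ℝ) + ρ₀ • M
      = (((n:ℝ)-1-ρ₀)/((n:ℝ)-1))•1 + (ρ₀*(n:ℝ)/((n:ℝ)-1))•J := by
    rw [hM, hEJ]
    match_scalars <;> field_simp <;> ring
  set a : ℝ := ((n:ℝ)-1-ρ₀)/((n:ℝ)-1-ρ) with ha
  set b : ℝ := (1+ρ₀)/(1+ρ) with hb
  have hX : ((((n:ℝ)-1)/((n:ℝ)-1-ρ))•(1:Matrix (Fin n) (Fin n) ℝ)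
      + (-(ρ*(n:ℝ))/(((n:ℝ)-1-ρ)*(1+ρ)))•J) * (1 + ρ • M) = 1 := by
    rw [hMform, key]
    have : (1:Matrix (Fin n) (Fin n) ℝ) = (1:ℝ)•1 + (0:ℝ)•J := by simp
    rw [this]
    match_scalars <;> field_simp <;> ring
  have hMinv : (1 + ρ • M)⁻¹ = (((n:ℝ)-1)/((n:ℝ)-1-ρ))•(1:Matrix (Fin n) (Fin n) ℝ)
      + (-(ρ*(n:ℝ))/(((n:ℝ)-1-ρ)*(1+ρ)))•J := Matrix.inv_eq_left_inv hX
  have h𝓜form : 𝓜 = a•(1:Matrix (Fin n) (Fin n) ℝ) + (b-a)•J := by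
    rw [h𝓜, hMinv, hM0form, key]
    congr 1
    · congr 1
      rw [ha]; field_simp
    · congr 1
      rw [ha, hb]; field_simp; ring
  have htrA : A.trace = 0 := by
    simp [Matrix.trace, Matrix.diag, hAdiag]
  have h1 : (J * (A * J)).trace = (A*J).trace := by
    rw [Matrix.trace_mul_comm, mul_assoc, hJJ]
  have h2 : (J*A).trace = (A*J).trace := Matrix.trace_mul_comm J A
  have hcoef : b*b - a*a = (ρ₀ - ρ) * ((b + a) * (1/(1+ρ) + 1/((n:ℝ)-1-ρ))) := by
    rw [ha, hb]; field_simp; ring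
  rw [h𝓜form]
  simp only [add_mul, mul_add, smul_mul_assoc, mul_smul_comm, one_mul, mul_one,
    Matrix.trace_add, Matrix.trace_smul, smul_eq_mul, mul_assoc, htrA, h1, h2]
  linear_combination (A*J).trace * hcoef
end

section
/- Let n ≥ 2, M = (𝟏𝟏ᵀ − I)/(n−1), ρ₀ ∈ (−1,1) fixed, and let A be a symmetric n×n matrix with zero diagonal satisfying 𝟏ᵀA𝟏 > 0. Define 𝓜(ρ) = (I + ρM)⁻¹(I + ρ₀M). Then for ρ ∈ (−1, 1), tr(𝓜(ρ)·A·𝓜(ρ)) = 0 if and only if ρ = ρ₀. -/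
open Matrix

theorem stmt_11 (n : ℕ) (hn : 2 ≤ n) (ρ ρ₀ : ℝ)
    (hρ : ρ ∈ Set.Ioo (-1 : ℝ) 1) (hρ₀ : ρ₀ ∈ Set.Ioo (-1 : ℝ) 1)
    (M A : Matrix (Fin n) (Fin n) ℝ)
    (hM : M = ((n : ℝ) - 1)⁻¹ • (Matrix.of (fun _ _ => (1 : ℝ)) - 1))
    (hAsymm : A.IsSymm) (hAdiag : ∀ i, A i i = 0)
    (hA1 : 0 < (fun _ => (1 : ℝ)) ⬝ᵥ (A *ᵥ fun _ => (1 : ℝ))) :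
    (((1 + ρ • M)⁻¹ * (1 + ρ₀ • M)) * A * ((1 + ρ • M)⁻¹ * (1 + ρ₀ • M))).trace = 0
      ↔ ρ = ρ₀ := by
  obtain ⟨hρ1, hρ2⟩ := hρ
  obtain ⟨hρ₀1, hρ₀2⟩ := hρ₀
  set J : Matrix (Fin n) (Fin n) ℝ := Matrix.of (fun _ _ => (1:ℝ)) with hJ
  set r : ℝ := (n : ℝ) - 1 with hrdef
  have hn2 : (2:ℝ) ≤ (n:ℝ) := by exact_mod_cast hn
  have hr : 1 ≤ r := by rw [hrdef]; linarith
  have hnr : (n : ℝ) = r + 1 := by rw [hrdef]; ring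
  have hr0 : r ≠ 0 := by linarith
  have hrρ : 0 < r - ρ := by linarith
  have hrρ₀ : 0 < r - ρ₀ := by linarith
  have h1ρ : 0 < 1 + ρ := by linarith
  have h1ρ₀ : 0 < 1 + ρ₀ := by linarith
  have hJJ : J * J = (n : ℝ) • J := by
    ext i j; simp [Matrix.mul_apply, hJ]
  have hM' : ∀ t : ℝ, 1 + t • M = (1 - t / r) • 1 + (t / r) • J := by
    intro t
    rw [hM]
    ext i j
    by_cases h : i = j <;>
      simp [h, Matrix.one_apply, hJ, Matrix.sub_apply, div_eq_mul_inv] <;> ring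
  have key : ∀ a b a' b' : ℝ, (a • (1:Matrix (Fin n) (Fin n) ℝ) + b • J) * (a' • 1 + b' • J)
      = (a*a') • 1 + (a*b' + b*a' + (n:ℝ)*b*b') • J := by
    intro a b a' b'
    simp only [add_mul, mul_add, smul_mul_assoc, mul_smul_comm, one_mul, mul_one, smul_smul, hJJ]
    module
  set x : ℝ := r / (r - ρ) with hx
  set y : ℝ := -ρ / ((r - ρ) * (1 + ρ)) with hy
  have hinv : (1 + ρ • M)⁻¹ = x • 1 + y • J := by
    apply Matrix.inv_eq_right_inv
    rw [hM' ρ, key]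
    have e1 : (1 - ρ/r) * x = 1 := by rw [hx]; field_simp
    have e2 : (1 - ρ/r)*y + (ρ/r)*x + (n:ℝ)*(ρ/r)*y = 0 := by
      rw [hx, hy, hnr]; field_simp; ring
    rw [e1, e2]; simp
  set p : ℝ := (r - ρ₀) / (r - ρ) with hp
  set q : ℝ := (ρ₀ - ρ) / ((r - ρ) * (1 + ρ)) with hq
  have hMM : (1 + ρ • M)⁻¹ * (1 + ρ₀ • M) = p • 1 + q • J := by
    rw [hinv, hM' ρ₀, key]
    have e1 : x * (1 - ρ₀/r) = p := by rw [hx, hp]; field_simp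
    have e2 : x*(ρ₀/r) + y*(1 - ρ₀/r) + (n:ℝ)*y*(ρ₀/r) = q := by
      rw [hx, hy, hq, hnr]; field_simp; ring
    rw [e1, e2]
  set S : ℝ := ∑ i, ∑ j, A i j with hS
  have hSpos : 0 < S := by
    have : (fun _ => (1 : ℝ)) ⬝ᵥ (A *ᵥ fun _ => (1 : ℝ)) = S := by
      simp [dotProduct, Matrix.mulVec, hS]
    rwa [this] at hA1
  have trA : A.trace = 0 := by simp [Matrix.trace, Matrix.diag, hAdiag]
  have trAJ : (A * J).trace = S := by
    simp [Matrix.trace, Matrix.diag, Matrix.mul_apply, hJ, hS]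
  have trJA : (J * A).trace = S := by
    simp only [Matrix.trace, Matrix.diag, Matrix.mul_apply, hJ, Matrix.of_apply, one_mul, hS]
    rw [Finset.sum_comm]
  have trJAJ : (J * A * J).trace = (n : ℝ) * S := by
    rw [Matrix.trace_mul_comm, ← Matrix.mul_assoc, hJJ, Matrix.smul_mul,
      Matrix.trace_smul, trJA, smul_eq_mul]
  have expand : ((p • (1:Matrix (Fin n) (Fin n) ℝ) + q • J) * A * (p • 1 + q • J)).trace
      = (2*p*q + (n:ℝ)*q^2) * S := by
    have : (p • (1:Matrix (Fin n) (Fin n) ℝ) + q • J) * A * (p • 1 + q • J)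
        = (p*p) • A + (p*q) • (A*J) + (q*p) • (J*A) + (q*q) • (J*A*J) := by
      simp only [add_mul, mul_add, smul_mul_assoc, mul_smul_comm, one_mul, mul_one, smul_smul]
      module
    rw [this]
    simp only [Matrix.trace_add, Matrix.trace_smul, trA, trAJ, trJA, trJAJ, smul_eq_mul]
    ring
  rw [hMM, expand]
  clear_value J x y S p q r
  clear hM hM' hMM hinv key hJJ trA trAJ trJA trJAJ expand hA1 hAsymm hAdiag hJ hS hx hy A M J x y hrdef hn2 hn
  have hne : (r - ρ) * (1 + ρ) ≠ 0 := by positivity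
  have h2p : 0 < 2*p + (n:ℝ)*q := by
    have : 2*p + (n:ℝ)*q = (r - ρ₀)/(r - ρ) + (1 + ρ₀)/(1 + ρ) := by
      rw [hp, hq, hnr]; field_simp; ring
    rw [this]; positivity
  constructor
  · intro h
    have h' : (2*p + (n:ℝ)*q) * q = 0 := by
      have := mul_eq_zero.mp (by linarith [h] : (2*p*q + (n:ℝ)*q^2) * S = 0)
      rcases this with h1 | h1
      · nlinarith [h1]
      · exact absurd h1 (ne_of_gt hSpos)
    have hq0 : q = 0 := by
      rcases mul_eq_zero.mp h' with h1 | h1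
      · exact absurd h1 (ne_of_gt h2p)
      · exact h1
    have : ρ₀ - ρ = 0 := by
      rw [hq, div_eq_zero_iff] at hq0
      rcases hq0 with h1 | h1
      · exact h1
      · exact absurd h1 hne
    linarith
  · intro h
    have hq0 : q = 0 := by rw [hq, h]; simp
    rw [hq0]; ring
end
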